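/- arXiv:2301.02744 — 5 statements merged into one kernel-verified Lean document; each statement's English description precedes it below -/
import Mathlib

section
/- Let ρ be a density matrix indexed by (Fin 2 × Fin 2) (a two-qubit state) such that Tr((Tr_A ρ)²) = 1, i.e., the reduced state of the second qubit is pure. Then ρ is singular: det ρ = 0 (equivalently, ρ is not positive definite). -/
/-!
The reduced state `σ = Tr_A ρ` is a `2 × 2` matrix with `tr σ = tr σ² = 1`, so
`2 det σ = (tr σ)² - tr σ² = 0` and `σ` has a kernel vector `v`. Since
`⟨v, σ v⟩ = ∑ᵢ ⟨eᵢ ⊗ v, ρ (eᵢ ⊗ v)⟩` is a sum of nonnegative terms, each term vanishes, and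
positive semidefiniteness of `ρ` puts `e₀ ⊗ v` in the kernel of `ρ`.
-/

open ComplexOrder

/-- A density matrix: Hermitian, positive semidefinite, trace one. -/
def IsDensityMatrix {n : Type*} [Fintype n] [DecidableEq n] (ρ : Matrix n n ℂ) : Prop :=
  ρ.IsHermitian ∧ ρ.PosSemidef ∧ ρ.trace = 1

/-- Partial trace over the first factor. -/
noncomputable def ptraceA {nA nB : ℕ} (M : Matrix (Fin nA × Fin nB) (Fin nA × Fin nB) ℂ) :
    Matrix (Fin nB) (Fin nB) ℂ :=
  Matrix.of fun j j' => ∑ i, M (i, j) (i, j')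

open Matrix

theorem Matrix.two_mul_det_fin_two {R : Type*} [CommRing R] (A : Matrix (Fin 2) (Fin 2) R) :
    2 * A.det = A.trace ^ 2 - (A * A).trace := by
  simp only [det_fin_two, trace_fin_two, mul_apply, Fin.sum_univ_two]
  ring

section PartialTrace

variable {nA nB : ℕ}

theorem trace_ptraceA (M : Matrix (Fin nA × Fin nB) (Fin nA × Fin nB) ℂ) :
    (ptraceA M).trace = M.trace := by
  simp only [trace, diag, ptraceA, of_apply, Fintype.sum_prod_type]
  exact Finset.sum_comm

/-- The vector `eᵢ ⊗ v`. -/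
def tensorSingle (i : Fin nA) (v : Fin nB → ℂ) : Fin nA × Fin nB → ℂ :=
  fun p => if p.1 = i then v p.2 else 0

theorem tensorSingle_ne_zero (i : Fin nA) {v : Fin nB → ℂ} (hv : v ≠ 0) :
    tensorSingle i v ≠ 0 := by
  contrapose! hv
  funext b
  simpa [tensorSingle] using congrFun hv (i, b)

theorem star_dotProduct_ptraceA_mulVec (M : Matrix (Fin nA × Fin nB) (Fin nA × Fin nB) ℂ)
    (v : Fin nB → ℂ) :
    star v ⬝ᵥ (ptraceA M *ᵥ v) = ∑ i, star (tensorSingle i v) ⬝ᵥ (M *ᵥ tensorSingle i v) := by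
  simp only [dotProduct, Pi.star_apply, RCLike.star_def, mulVec, ptraceA, of_apply,
    Finset.sum_mul, Finset.mul_sum, tensorSingle, apply_ite (starRingEnd ℂ), map_zero, mul_ite,
    mul_zero, Fintype.sum_prod_type, Finset.sum_ite_irrel, Finset.sum_const_zero,
    Finset.sum_ite_eq', Finset.mem_univ, ↓reduceIte, ite_mul, zero_mul]
  exact (Finset.sum_congr rfl fun _ _ => Finset.sum_comm).trans Finset.sum_comm

theorem Matrix.PosSemidef.mulVec_tensorSingle_eq_zero
    {M : Matrix (Fin nA × Fin nB) (Fin nA × Fin nB) ℂ} (hM : M.PosSemidef) {v : Fin nB → ℂ}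
    (hv : ptraceA M *ᵥ v = 0) (i : Fin nA) :
    M *ᵥ tensorSingle i v = 0 := by
  have hsum := star_dotProduct_ptraceA_mulVec M v
  rw [hv, dotProduct_zero, eq_comm, Finset.sum_eq_zero_iff_of_nonneg
    (fun _ _ => hM.dotProduct_mulVec_nonneg _)] at hsum
  exact (hM.dotProduct_mulVec_zero_iff _).mp (hsum i (Finset.mem_univ i))

theorem Matrix.PosSemidef.det_eq_zero_of_det_ptraceA_eq_zero [NeZero nA]
    {M : Matrix (Fin nA × Fin nB) (Fin nA × Fin nB) ℂ} (hM : M.PosSemidef)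
    (h : (ptraceA M).det = 0) : M.det = 0 := by
  obtain ⟨v, hv, hMv⟩ := exists_mulVec_eq_zero_iff.mpr h
  exact exists_mulVec_eq_zero_iff.mp
    ⟨tensorSingle 0 v, tensorSingle_ne_zero 0 hv, hM.mulVec_tensorSingle_eq_zero hMv 0⟩

end PartialTrace

/-- If the reduced state of the second qubit of a two-qubit state ρ is pure,
then ρ is singular (equivalently, ρ is not positive definite). -/
theorem singular_of_reduced_pure (ρ : Matrix (Fin 2 × Fin 2) (Fin 2 × Fin 2) ℂ)
    (hρ : IsDensityMatrix ρ)
    (hpure : (ptraceA ρ * ptraceA ρ).trace = 1) :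
    ρ.det = 0 ∧ ¬ ρ.PosDef := by
  obtain ⟨-, hpsd, htr⟩ := hρ
  have hσ : (ptraceA ρ).det = 0 := by
    have h := two_mul_det_fin_two (ptraceA ρ)
    rw [trace_ptraceA, htr, hpure] at h
    simpa using h
  have hdet := hpsd.det_eq_zero_of_det_ptraceA_eq_zero hσ
  exact ⟨hdet, fun hpd => hpd.det_pos.ne' hdet⟩
end

section
/- Let h_A, h_B be 2×2 complex matrices, H_I a matrix indexed by (Fin 2 × Fin 2), ℓ₁, …, ℓ_m finitely many 2×2 complex matrices, and set H = h_A ⊗ I₂ + H_I + I₂ ⊗ h_B and L_k = ℓ_k ⊗ I₂. Define the GKLS generator G(ρ) = −i·(H·ρ − ρ·H) + Σ_k ( L_k·ρ·L_k† − (1/2)·L_k†·L_k·ρ − (1/2)·ρ·L_k†·L_k ). Then for every matrix ρ indexed by (Fin 2 × Fin 2), writing ρ_B = Tr_A ρ, one has Tr( ρ_B · Tr_A(G(ρ)) ) = Tr( ρ_B · Tr_A( −i·(H_I·ρ − ρ·H_I) ) ). In particular, only the interaction Hamiltonian H_I contributes to the variation of the purity of the reduced state on B. -/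
open Kronecker Matrix

lemma ptraceA_add {nA nB : ℕ} (M N : Matrix (Fin nA × Fin nB) (Fin nA × Fin nB) ℂ) :
    ptraceA (M + N) = ptraceA M + ptraceA N := by
  ext j j'; simp [ptraceA, Finset.sum_add_distrib]

lemma ptraceA_sub {nA nB : ℕ} (M N : Matrix (Fin nA × Fin nB) (Fin nA × Fin nB) ℂ) :
    ptraceA (M - N) = ptraceA M - ptraceA N := by
  ext j j'; simp [ptraceA, Finset.sum_sub_distrib]

lemma ptraceA_smul {nA nB : ℕ} (c : ℂ) (M : Matrix (Fin nA × Fin nB) (Fin nA × Fin nB) ℂ) :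
    ptraceA (c • M) = c • ptraceA M := by
  ext j j'; simp [ptraceA, Finset.mul_sum]

lemma ptraceA_sum {nA nB m : ℕ} (f : Fin m → Matrix (Fin nA × Fin nB) (Fin nA × Fin nB) ℂ) :
    ptraceA (∑ k, f k) = ∑ k, ptraceA (f k) := by
  ext j j'; simp [ptraceA, Matrix.sum_apply]; rw [Finset.sum_comm]

lemma keyL (A : Matrix (Fin 2) (Fin 2) ℂ) (ρ : Matrix (Fin 2 × Fin 2) (Fin 2 × Fin 2) ℂ) :
    ptraceA ((A ⊗ₖ (1 : Matrix (Fin 2) (Fin 2) ℂ)) * ρ) =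
    ptraceA (ρ * (A ⊗ₖ (1 : Matrix (Fin 2) (Fin 2) ℂ))) := by
  ext j j'
  simp [ptraceA, Matrix.mul_apply, Fintype.sum_prod_type, Fin.sum_univ_two,
    Matrix.one_apply, kroneckerMap_apply]
  ring

lemma keyLR (A B : Matrix (Fin 2) (Fin 2) ℂ) (ρ : Matrix (Fin 2 × Fin 2) (Fin 2 × Fin 2) ℂ) :
    ptraceA ((A ⊗ₖ (1 : Matrix (Fin 2) (Fin 2) ℂ)) * ρ * (B ⊗ₖ (1 : Matrix (Fin 2) (Fin 2) ℂ))) =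
    ptraceA (((B * A) ⊗ₖ (1 : Matrix (Fin 2) (Fin 2) ℂ)) * ρ) := by
  ext j j'
  simp [ptraceA, Matrix.mul_apply, Fintype.sum_prod_type, Fin.sum_univ_two,
    Matrix.one_apply, kroneckerMap_apply]
  ring

lemma ptraceA_oneKron_left (B : Matrix (Fin 2) (Fin 2) ℂ)
    (ρ : Matrix (Fin 2 × Fin 2) (Fin 2 × Fin 2) ℂ) :
    ptraceA (((1 : Matrix (Fin 2) (Fin 2) ℂ) ⊗ₖ B) * ρ) = B * ptraceA ρ := by
  ext j j'
  simp [ptraceA, Matrix.mul_apply, Fintype.sum_prod_type, Fin.sum_univ_two,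
    Matrix.one_apply, kroneckerMap_apply]
  ring

lemma ptraceA_oneKron_right (B : Matrix (Fin 2) (Fin 2) ℂ)
    (ρ : Matrix (Fin 2 × Fin 2) (Fin 2 × Fin 2) ℂ) :
    ptraceA (ρ * ((1 : Matrix (Fin 2) (Fin 2) ℂ) ⊗ₖ B)) = ptraceA ρ * B := by
  ext j j'
  simp [ptraceA, Matrix.mul_apply, Fintype.sum_prod_type, Fin.sum_univ_two,
    Matrix.one_apply, kroneckerMap_apply]
  ring

lemma kron_one_conjT (A : Matrix (Fin 2) (Fin 2) ℂ) :
    (A ⊗ₖ (1 : Matrix (Fin 2) (Fin 2) ℂ))ᴴ = Aᴴ ⊗ₖ (1 : Matrix (Fin 2) (Fin 2) ℂ) := by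
  ext ⟨i, j⟩ ⟨i', j'⟩
  simp [Matrix.conjTranspose_apply, kroneckerMap_apply, Matrix.one_apply]
  by_cases h : j = j' <;> simp [h, eq_comm]

/-- For a two-qubit GKLS generator whose control/drift Hamiltonians and jump operators
act only on the first qubit, only the interaction Hamiltonian H_I contributes to
Tr(ρ_B · Tr_A(G(ρ))), i.e. to the variation of the purity of the reduced state on B. -/
theorem purity_variation_only_from_interaction
    (hA hB : Matrix (Fin 2) (Fin 2) ℂ)
    (HI : Matrix (Fin 2 × Fin 2) (Fin 2 × Fin 2) ℂ)
    (m : ℕ) (ℓ : Fin m → Matrix (Fin 2) (Fin 2) ℂ)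
    (H : Matrix (Fin 2 × Fin 2) (Fin 2 × Fin 2) ℂ)
    (hH : H = hA ⊗ₖ (1 : Matrix (Fin 2) (Fin 2) ℂ) + HI +
      (1 : Matrix (Fin 2) (Fin 2) ℂ) ⊗ₖ hB)
    (L : Fin m → Matrix (Fin 2 × Fin 2) (Fin 2 × Fin 2) ℂ)
    (hL : ∀ k, L k = ℓ k ⊗ₖ (1 : Matrix (Fin 2) (Fin 2) ℂ))
    (ρ G : Matrix (Fin 2 × Fin 2) (Fin 2 × Fin 2) ℂ)
    (hG : G = -Complex.I • (H * ρ - ρ * H) +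
      ∑ k, (L k * ρ * (L k)ᴴ - (1 / 2 : ℂ) • ((L k)ᴴ * L k * ρ) -
        (1 / 2 : ℂ) • (ρ * ((L k)ᴴ * L k)))) :
    (ptraceA ρ * ptraceA G).trace =
      (ptraceA ρ * ptraceA (-Complex.I • (HI * ρ - ρ * HI))).trace := by
  have one1 : ((1 : Matrix (Fin 2) (Fin 2) ℂ) ⊗ₖ (1 : Matrix (Fin 2) (Fin 2) ℂ)) =
      (1 : Matrix (Fin 2 × Fin 2) (Fin 2 × Fin 2) ℂ) := by
    simp
  have hDk : ∀ k, ptraceA (L k * ρ * (L k)ᴴ - (1 / 2 : ℂ) • ((L k)ᴴ * L k * ρ) -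
      (1 / 2 : ℂ) • (ρ * ((L k)ᴴ * L k))) = 0 := by
    intro k
    rw [hL, kron_one_conjT]
    have hLL : (ℓ k)ᴴ ⊗ₖ (1 : Matrix (Fin 2) (Fin 2) ℂ) * (ℓ k ⊗ₖ (1 : Matrix (Fin 2) (Fin 2) ℂ))
        = ((ℓ k)ᴴ * ℓ k) ⊗ₖ (1 : Matrix (Fin 2) (Fin 2) ℂ) := by
      rw [← Matrix.mul_kronecker_mul, one_mul]
    rw [ptraceA_sub, ptraceA_sub, ptraceA_smul, ptraceA_smul, keyLR, hLL, ← keyL]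
    module
  have hptrG : ptraceA G = ptraceA (-Complex.I • (HI * ρ - ρ * HI)) +
      (-Complex.I) • (hB * ptraceA ρ - ptraceA ρ * hB) := by
    rw [hG, hH, ptraceA_add, ptraceA_sum]
    rw [Finset.sum_eq_zero fun k _ => hDk k]
    have hexp : (hA ⊗ₖ (1 : Matrix (Fin 2) (Fin 2) ℂ) + HI +
        (1 : Matrix (Fin 2) (Fin 2) ℂ) ⊗ₖ hB) * ρ -
        ρ * (hA ⊗ₖ (1 : Matrix (Fin 2) (Fin 2) ℂ) + HI +
        (1 : Matrix (Fin 2) (Fin 2) ℂ) ⊗ₖ hB)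
        = ((hA ⊗ₖ (1 : Matrix (Fin 2) (Fin 2) ℂ)) * ρ - ρ * (hA ⊗ₖ (1 : Matrix (Fin 2) (Fin 2) ℂ)))
          + (HI * ρ - ρ * HI)
          + (((1 : Matrix (Fin 2) (Fin 2) ℂ) ⊗ₖ hB) * ρ - ρ * ((1 : Matrix (Fin 2) (Fin 2) ℂ) ⊗ₖ hB)) := by
      noncomm_ring
    rw [hexp, ptraceA_smul, ptraceA_add, ptraceA_add, ptraceA_sub, ptraceA_sub, ptraceA_sub,
      keyL, ptraceA_oneKron_left, ptraceA_oneKron_right]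
    simp only [ptraceA_smul, ptraceA_sub]
    module
  rw [hptrG, Matrix.mul_add, Matrix.trace_add]
  have hz : (ptraceA ρ * ((-Complex.I) • (hB * ptraceA ρ - ptraceA ρ * hB))).trace = 0 := by
    rw [Matrix.mul_smul, Matrix.trace_smul, Matrix.mul_sub, Matrix.trace_sub,
      ← Matrix.mul_assoc, Matrix.trace_mul_cycle (ptraceA ρ) hB (ptraceA ρ), ← Matrix.mul_assoc]
    simp
  rw [hz, add_zero]
end

section
/- Let s ∈ {1, −1}, let h be a 2×2 complex matrix, g, ω real numbers, ℓ₁, …, ℓ_m finitely many 2×2 complex matrices, and set H = h ⊗ I₂ + g·(σ₃ ⊗ σ₃) + ω·(I₂ ⊗ σ₃), L_k = ℓ_k ⊗ I₂, and P_s = (1/2)·(I₂ + s·σ₃). Then for every 2×2 complex matrix ρ_A: −i·( H·(ρ_A ⊗ P_s) − (ρ_A ⊗ P_s)·H ) + Σ_k ( L_k·(ρ_A ⊗ P_s)·L_k† − (1/2)·L_k†·L_k·(ρ_A ⊗ P_s) − (1/2)·(ρ_A ⊗ P_s)·L_k†·L_k ) = X ⊗ P_s, where X = −i·( (h + s·g·σ₃)·ρ_A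 − ρ_A·(h + s·g·σ₃) ) + Σ_k ( ℓ_k·ρ_A·ℓ_k† − (1/2)·ℓ_k†·ℓ_k·ρ_A − (1/2)·ρ_A·ℓ_k†·ℓ_k ). In particular, the sets of states of the form ρ_A ⊗ (1/2)(I₂ ± σ₃) are invariant under the controlled GKLS dynamics with dispersive coupling, for every control and every dissipation acting only on the first qubit. -/
open Kronecker Matrix

/-- The Pauli matrix σ₃. -/
def σ₃ : Matrix (Fin 2) (Fin 2) ℂ := !![1, 0; 0, -1]

lemma kron_conjT {l m n p : Type*} (A : Matrix l m ℂ) (B : Matrix n p ℂ) :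
    (A ⊗ₖ B)ᴴ = Aᴴ ⊗ₖ Bᴴ := by
  ext ⟨i, j⟩ ⟨i', j'⟩
  simp [Matrix.conjTranspose_apply, Matrix.kroneckerMap_apply, mul_comm]

lemma kron_sub_left {l m n p : Type*} (A B : Matrix l m ℂ) (C : Matrix n p ℂ) :
    (A - B) ⊗ₖ C = A ⊗ₖ C - B ⊗ₖ C := by
  ext ⟨i, j⟩ ⟨i', j'⟩; simp [Matrix.kroneckerMap_apply, sub_mul]

lemma kron_sub_right {l m n p : Type*} (A : Matrix l m ℂ) (B C : Matrix n p ℂ) :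
    A ⊗ₖ (B - C) = A ⊗ₖ B - A ⊗ₖ C := by
  ext ⟨i, j⟩ ⟨i', j'⟩; simp [Matrix.kroneckerMap_apply, mul_sub]

lemma kron_sum_left {l m n p ι : Type*} (t : Finset ι) (A : ι → Matrix l m ℂ)
    (B : Matrix n p ℂ) : (∑ k ∈ t, A k) ⊗ₖ B = ∑ k ∈ t, A k ⊗ₖ B := by
  ext ⟨i, j⟩ ⟨i', j'⟩
  simp [Matrix.kroneckerMap_apply, Matrix.sum_apply, Finset.sum_mul]

lemma sigma3_sq : σ₃ * σ₃ = 1 := by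
  ext i j
  fin_cases i <;> fin_cases j <;> simp [σ₃, Matrix.mul_apply, Fin.sum_univ_two]

lemma sigma3_conjT : σ₃ᴴ = σ₃ := by
  ext i j
  fin_cases i <;> fin_cases j <;> simp [σ₃]

/-- For dispersive coupling g·σ₃⊗σ₃, any Hamiltonian and dissipation acting only on the
first qubit leave the sets of states of the form ρ_A ⊗ (1/2)(I₂ ± σ₃) invariant: the GKLS
vector field at such a state is again of the form X ⊗ (1/2)(I₂ ± σ₃). -/
theorem dispersive_invariant_slices
    (s : ℝ) (hs : s = 1 ∨ s = -1)
    (h : Matrix (Fin 2) (Fin 2) ℂ) (g ω : ℝ)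
    (m : ℕ) (ℓ : Fin m → Matrix (Fin 2) (Fin 2) ℂ)
    (H : Matrix (Fin 2 × Fin 2) (Fin 2 × Fin 2) ℂ)
    (hH : H = h ⊗ₖ (1 : Matrix (Fin 2) (Fin 2) ℂ) + (g : ℂ) • (σ₃ ⊗ₖ σ₃) +
      (ω : ℂ) • ((1 : Matrix (Fin 2) (Fin 2) ℂ) ⊗ₖ σ₃))
    (L : Fin m → Matrix (Fin 2 × Fin 2) (Fin 2 × Fin 2) ℂ)
    (hL : ∀ k, L k = ℓ k ⊗ₖ (1 : Matrix (Fin 2) (Fin 2) ℂ))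
    (P : Matrix (Fin 2) (Fin 2) ℂ)
    (hP : P = (1 / 2 : ℂ) • ((1 : Matrix (Fin 2) (Fin 2) ℂ) + (s : ℂ) • σ₃))
    (ρA : Matrix (Fin 2) (Fin 2) ℂ)
    (X : Matrix (Fin 2) (Fin 2) ℂ)
    (hX : X = -Complex.I • ((h + ((s : ℂ) * (g : ℂ)) • σ₃) * ρA -
        ρA * (h + ((s : ℂ) * (g : ℂ)) • σ₃)) +
      ∑ k, (ℓ k * ρA * (ℓ k)ᴴ - (1 / 2 : ℂ) • ((ℓ k)ᴴ * ℓ k * ρA) -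
        (1 / 2 : ℂ) • (ρA * ((ℓ k)ᴴ * ℓ k)))) :
    -Complex.I • (H * (ρA ⊗ₖ P) - (ρA ⊗ₖ P) * H) +
      ∑ k, (L k * (ρA ⊗ₖ P) * (L k)ᴴ - (1 / 2 : ℂ) • ((L k)ᴴ * L k * (ρA ⊗ₖ P)) -
        (1 / 2 : ℂ) • ((ρA ⊗ₖ P) * ((L k)ᴴ * L k))) = X ⊗ₖ P := by
  have hs2 : (s : ℂ) * (s : ℂ) = 1 := by rcases hs with rfl | rfl <;> norm_num
  have hσP : σ₃ * P = (s : ℂ) • P := by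
    subst hP; rcases hs with rfl | rfl <;> ext i j <;> fin_cases i <;> fin_cases j <;>
      simp [σ₃, Matrix.mul_apply, Fin.sum_univ_two, Matrix.one_apply] <;> norm_num
  have hPσ : P * σ₃ = (s : ℂ) • P := by
    subst hP; rcases hs with rfl | rfl <;> ext i j <;> fin_cases i <;> fin_cases j <;>
      simp [σ₃, Matrix.mul_apply, Fin.sum_univ_two, Matrix.one_apply] <;> norm_num
  have hPP : P * P = P := by
    subst hP; rcases hs with rfl | rfl <;> ext i j <;> fin_cases i <;> fin_cases j <;>
      simp [σ₃, Matrix.mul_apply, Fin.sum_univ_two, Matrix.one_apply] <;> norm_num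
  have hPH : Pᴴ = P := by
    rw [hP, Matrix.conjTranspose_smul, Matrix.conjTranspose_add, Matrix.conjTranspose_one,
      Matrix.conjTranspose_smul, sigma3_conjT]
    rcases hs with rfl | rfl <;> norm_num
  subst hH hX
  simp only [hL, kron_conjT, Matrix.conjTranspose_one, ← Matrix.mul_kronecker_mul,
    Matrix.add_mul, Matrix.mul_add, Matrix.smul_mul, Matrix.mul_smul,
    Matrix.one_mul, Matrix.mul_one, hσP, hPσ, hPP,
    Matrix.kronecker_smul, Matrix.smul_kronecker,
    Matrix.add_kronecker, Matrix.kronecker_add,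
    kron_sub_left, kron_sub_right, kron_sum_left]
  simp only [smul_smul, mul_comm (g:ℂ) (s:ℂ)]
  module
end

section
/- Let a₁, a₂, a₃, b₁, b₂, b₃ be real numbers with a₁² + a₂² + a₃² ≤ 1/4 and b₁² + b₂² + b₃² = 1/4, and set c = a₂·b₁ − a₁·b₂. Assume the following equations hold: (1) a₃·b₁·b₂ + a₁·a₂·b₃ = 0; (2) a₃·(4·b₂² − 1) + b₃·(1 − 4·a₁²) = 0; (3) 4·a₁·c + b₂·(1 − 4·a₃·b₃) = 0; (4) a₃·(4·b₁² − 1) + b₃·(1 − 4·a₂²) = 0; (5) 4·a₂·c + b₁·(4·a₃·b₃ − 1) = 0; (6) 4·b₁·c + a₂·(1 − 4·a₃·b₃) = 0; (7) −4·b₂·c + a₁·(4·a₃·b₃ − 1) = 0; (8) c·(a₃ − b₃) = 0. Then a₁² + a₂² + a₃² = 1/4. (For the resonant coupling H_I = g(σ₊⊗σ₋ + σ₋⊗σ₊), the vanishing of these quantities along a trajectory keeping the reduced state of the second qubit pure forces the reduced state of the first qubit, with Bloch vector (2a₁,2a₂,2a₃), to be pure as well.) -/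
/-- For the resonant coupling, the vanishing of the obstruction vector w along a
trajectory keeping the second qubit's reduced state pure forces the first qubit's
reduced state (with Bloch vector (2a₁,2a₂,2a₃)) to be pure as well. -/
theorem resonant_forces_ancilla_pure
    (a₁ a₂ a₃ b₁ b₂ b₃ c : ℝ)
    (ha : a₁ ^ 2 + a₂ ^ 2 + a₃ ^ 2 ≤ 1 / 4)
    (hb : b₁ ^ 2 + b₂ ^ 2 + b₃ ^ 2 = 1 / 4)
    (hc : c = a₂ * b₁ - a₁ * b₂)
    (h1 : a₃ * b₁ * b₂ + a₁ * a₂ * b₃ = 0)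
    (h2 : a₃ * (4 * b₂ ^ 2 - 1) + b₃ * (1 - 4 * a₁ ^ 2) = 0)
    (h3 : 4 * a₁ * c + b₂ * (1 - 4 * a₃ * b₃) = 0)
    (h4 : a₃ * (4 * b₁ ^ 2 - 1) + b₃ * (1 - 4 * a₂ ^ 2) = 0)
    (h5 : 4 * a₂ * c + b₁ * (4 * a₃ * b₃ - 1) = 0)
    (h6 : 4 * b₁ * c + a₂ * (1 - 4 * a₃ * b₃) = 0)
    (h7 : -4 * b₂ * c + a₁ * (4 * a₃ * b₃ - 1) = 0)
    (h8 : c * (a₃ - b₃) = 0) :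
    a₁ ^ 2 + a₂ ^ 2 + a₃ ^ 2 = 1 / 4 := by
  have key : (a₂ ^ 2 + b₁ ^ 2) * (1 - 4 * a₃ * b₃) = 0 := by linear_combination a₂ * h6 - b₁ * h5
  rcases mul_eq_zero.mp key with hz | hk
  · -- a₂ = 0 and b₁ = 0
    have ha2 : a₂ = 0 := by nlinarith [sq_nonneg a₂, sq_nonneg b₁]
    have hb1 : b₁ = 0 := by nlinarith [sq_nonneg a₂, sq_nonneg b₁]
    subst ha2; subst hb1
    have hab : a₃ = b₃ := by nlinarith [h4]
    subst hab
    have h2' : a₃ * (b₂ ^ 2 - a₁ ^ 2) = 0 := by linear_combination h2 / 4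
    rcases mul_eq_zero.mp h2' with h3z | heq
    · subst h3z
      have hb2 : b₂ ^ 2 = 1 / 4 := by nlinarith [hb]
      have hc' : c = -a₁ * b₂ := by linarith [hc]
      have : b₂ * (1 - 4 * a₁ ^ 2) = 0 := by linear_combination h3 - 4 * a₁ * hc'
      have hb2ne : b₂ ≠ 0 := by
        intro h; rw [h] at hb2; norm_num at hb2
      have : 1 - 4 * a₁ ^ 2 = 0 := by
        rcases mul_eq_zero.mp this with h | h
        · exact absurd h hb2ne
        · exact h
      nlinarith [sq_nonneg a₁]
    · linarith [heq, hb]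
  · -- a₃ * b₃ = 1/4
    clear h1 h2 h3 h4 h5 h6 h7 h8 hc key
    have ha3 : a₃ ^ 2 ≥ 1 / 4 := by
      nlinarith [sq_nonneg (a₃ - b₃), sq_nonneg b₁, sq_nonneg b₂]
    linarith [sq_nonneg a₁, sq_nonneg a₂]
end

section
/- Let N ≥ 1, let H₀, H₁, …, H_m be Hermitian N×N complex matrices, let L₁, …, L_p be N×N complex matrices, and let u₁, …, u_m : ℝ → ℝ be continuous control functions. Suppose ρ : ℝ → (N×N complex matrices) is differentiable and satisfies, for all t, the controlled GKLS equation ρ'(t) = −i·(H(t)·ρ(t) − ρ(t)·H(t)) + Σ_k ( L_k·ρ(t)·L_k† − (1/2)·L_k†·L_k·ρ(t) − (1/2)·ρ(t)·L_k†·L_k ), where H(t) = H₀ + Σ_j u_j(t)·H_j. If ρ(0) is positive definite, then ρ(t) is positive definite for every t ≥ 0. (Consequently, no singular density matrix — i.e., no point of the boundary of the set of states — can be reached in finite time from the interior by coherent control.) -/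
/-!
Write the equation as `ρ' = 𝓛_t ρ`. The generator `𝓛_t` is linear and commutes with `ᴴ`
because `H(t)` is Hermitian, so `ρ - ρᴴ` solves a linear ODE with zero initial value and
vanishes: `ρ(t)` stays Hermitian.

Jacobi's formula gives `(det ρ)' = tr (adj ρ · 𝓛_t ρ)`. The commutator contributes nothing
and the anticommutator exactly `-det ρ · c` with `c = Σ tr (L_kᴴ L_k)`, while
`tr (adj ρ · L_k ρ L_kᴴ)` is the trace of a product of positive semidefinite matrices, hence
nonnegative. So while `ρ` stays positive definite, `det ρ(t) ≥ det ρ(0) e^{-ct}`. At the first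
time `T` at which `ρ` could stop being positive definite, `ρ(T)` is a positive semidefinite
limit with nonzero determinant, hence positive definite; and positive definiteness is open
among Hermitian matrices, so no such `T` exists.
-/

open ComplexOrder Matrix

attribute [local instance] Matrix.normedAddCommGroup Matrix.normedSpace

open Set Filter Topology

theorem forall_ge_of_nhdsGE_of_Ico {P : ℝ → Prop} {a : ℝ} (ha : P a)
    (hright : ∀ t, a ≤ t → P t → ∀ᶠ s in 𝓝[≥] t, P s)
    (hleft : ∀ t, a < t → (∀ s ∈ Ico a t, P s) → P t) : ∀ t, a ≤ t → P t := by
  by_contra! hbad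
  set B := {t | a ≤ t ∧ ¬P t}
  have hBdd : BddBelow B := ⟨a, fun _ h => h.1⟩
  have haT : a ≤ sInf B := le_csInf hbad fun _ h => h.1
  have hbelow : ∀ s ∈ Ico a (sInf B), P s := fun s hs => by
    by_contra h
    exact (csInf_le hBdd ⟨hs.1, h⟩).not_gt hs.2
  have hT : P (sInf B) := haT.eq_or_lt.elim (fun h => h ▸ ha) (fun h => hleft _ h hbelow)
  obtain ⟨u, hTu, hu⟩ := mem_nhdsGE_iff_exists_Ico_subset.mp (hright _ haT hT)
  obtain ⟨b, hbB, hbu⟩ := (csInf_lt_iff hBdd hbad).mp hTu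
  rcases lt_or_ge b (sInf B) with hbT | hbT
  · exact hbB.2 (hbelow b ⟨hbB.1, hbT⟩)
  · exact hbB.2 (hu ⟨hbT, hbu⟩)

theorem eq_zero_of_hasDerivAt_clm_apply {E : Type*} [NormedAddCommGroup E] [NormedSpace ℝ E]
    {f : ℝ → E} {A : ℝ → E →L[ℝ] E} {a : ℝ} (hA : Continuous A)
    (hf : ∀ t, HasDerivAt f (A t (f t)) t) (ha : f a = 0) : ∀ t, a ≤ t → f t = 0 := by
  intro T hT
  obtain ⟨K, hK⟩ := isCompact_Icc.exists_bound_of_continuousOn (hA.continuousOn (s := Icc a T))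
  refine eq_zero_of_abs_deriv_le_mul_abs_self_of_eq_zero_right (K := K)
    (fun t _ => (hf t).continuousAt.continuousWithinAt) (fun t _ => (hf t).hasDerivWithinAt) ha
    (fun t ht => ?_) T ⟨hT, le_rfl⟩
  exact (A t).le_of_opNorm_le (hK t (Ico_subset_Icc_self ht)) (f t)

theorem le_mul_exp_of_hasDerivWithinAt {g g' : ℝ → ℝ} {c a b : ℝ} (hab : a ≤ b)
    (hg : ContinuousOn g (Icc a b)) (hg' : ∀ x ∈ Ico a b, HasDerivWithinAt g (g' x) (Ici x) x)
    (bound : ∀ x ∈ Ico a b, -(c * g x) ≤ g' x) : g a * Real.exp (-(c * (b - a))) ≤ g b := by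
  have := le_gronwallBound_of_liminf_deriv_right_le (f := fun x => -g x) (f' := fun x => -g' x)
    (δ := -g a) (K := -c) (ε := 0) hg.neg
    (fun x hx r hr => (hg' x hx).neg.liminf_right_slope_le hr) le_rfl
    (fun x hx => by linarith [bound x hx]) b ⟨hab, le_rfl⟩
  rw [gronwallBound_ε0] at this
  simp only [neg_mul] at this
  linarith

namespace Matrix

variable {n : Type*} [Fintype n]

theorem sum_det_updateRow [DecidableEq n] {R : Type*} [CommRing R] (A B : Matrix n n R) :
    ∑ i, (A.updateRow i (B i)).det = (A.adjugate * B).trace := by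
  rw [trace_mul_comm]
  refine Finset.sum_congr rfl fun i _ => ?_
  rw [← cramer_transpose_apply, cramer_eq_adjugate_mulVec, ← adjugate_transpose]
  simp [mulVec, dotProduct, mul_apply, mul_comm]

variable (n) in
noncomputable def detRowContinuousMultilinear [DecidableEq n] (𝕜 : Type*) [RCLike 𝕜] :
    ContinuousMultilinearMap 𝕜 (fun _ : n => n → 𝕜) 𝕜 where
  toMultilinearMap := (detRowAlternating : (n → 𝕜) [⋀^n]→ₗ[𝕜] 𝕜).toMultilinearMap
  cont := continuous_id.matrix_det

theorem hasDerivAt_det [DecidableEq n] {𝕜 : Type*} [RCLike 𝕜] {f : ℝ → Matrix n n 𝕜}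
    {f' : Matrix n n 𝕜} {t : ℝ} (hf : HasDerivAt f f' t) :
    HasDerivAt (fun s => (f s).det) ((f t).adjugate * f').trace t := by
  have h := ((detRowContinuousMultilinear n 𝕜).hasFDerivAt (f t)).restrictScalars ℝ
    |>.comp_hasDerivAt t hf
  have hderiv : (detRowContinuousMultilinear n 𝕜).linearDeriv (f t) f' =
      ((f t).adjugate * f').trace := by
    erw [← sum_det_updateRow, ContinuousMultilinearMap.linearDeriv_apply]
    rfl
  exact hderiv ▸ h

theorem isClosed_setOf_posSemidef {𝕜 : Type*} [RCLike 𝕜] :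
    IsClosed {A : Matrix n n 𝕜 | A.PosSemidef} := by
  have : {A : Matrix n n 𝕜 | A.PosSemidef} =
      {A | Aᴴ = A} ∩ ⋂ x : n → 𝕜, {A | 0 ≤ star x ⬝ᵥ A *ᵥ x} := by
    ext A
    simp [posSemidef_iff_dotProduct_mulVec, IsHermitian]
  rw [this]
  exact (isClosed_eq continuous_id.matrix_conjTranspose continuous_id).inter
    (isClosed_iInter fun x => isClosed_le continuous_const (by fun_prop))

theorem PosDef.eventually_posDef {𝕜 : Type*} [RCLike 𝕜] {R : Matrix n n 𝕜}
    (hR : R.PosDef) : ∀ᶠ A in 𝓝 R, A.IsHermitian → A.PosDef := by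
  have hq : Continuous fun p : Matrix n n 𝕜 × (n → 𝕜) =>
      RCLike.re (star p.2 ⬝ᵥ p.1 *ᵥ p.2) := by
    fun_prop
  have hsphere : ∀ᶠ A in 𝓝 R, ∀ x ∈ Metric.sphere (0 : n → 𝕜) 1,
      0 < RCLike.re (star x ⬝ᵥ A *ᵥ x) :=
    (isCompact_sphere 0 1).eventually_forall_of_forall_eventually fun x hx =>
      continuousAt_const.eventually_lt hq.continuousAt
        (hR.re_dotProduct_pos (Metric.ne_of_mem_sphere hx one_ne_zero))
  filter_upwards [hsphere] with A hA hAH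
  refine .of_dotProduct_mulVec_pos hAH fun x hx => ?_
  have hx' : 0 < ‖x‖ := norm_pos_iff.mpr hx
  have hquad : RCLike.re (star (‖x‖⁻¹ • x) ⬝ᵥ A *ᵥ (‖x‖⁻¹ • x)) =
      ‖x‖⁻¹ ^ 2 * RCLike.re (star x ⬝ᵥ A *ᵥ x) := by
    simp [Matrix.mulVec_smul, dotProduct_smul, smul_dotProduct, star_smul, RCLike.smul_re, sq,
      mul_assoc]
  have hpos := hA (‖x‖⁻¹ • x) (by
    rw [mem_sphere_zero_iff_norm, norm_smul, norm_inv, norm_norm, inv_mul_cancel₀ hx'.ne'])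
  rw [hquad] at hpos
  exact RCLike.pos_iff.mpr ⟨pos_of_mul_pos_right hpos (by positivity),
    hAH.im_star_dotProduct_mulVec_self x⟩

open scoped MatrixOrder in
theorem PosSemidef.trace_mul_nonneg {𝕜 : Type*} [RCLike 𝕜] {A B : Matrix n n 𝕜}
    (hA : A.PosSemidef) (hB : B.PosSemidef) : 0 ≤ (A * B).trace := by
  classical
  obtain ⟨C, rfl⟩ := CStarAlgebra.nonneg_iff_eq_star_mul_self.mp hB.nonneg
  rw [← Matrix.mul_assoc, trace_mul_cycle]
  exact (hA.mul_mul_conjTranspose_same C).trace_nonneg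

theorem PosDef.posSemidef_adjugate [DecidableEq n] {𝕜 : Type*} [RCLike 𝕜] {R : Matrix n n 𝕜}
    (hR : R.PosDef) : R.adjugate.PosSemidef := by
  have : R.adjugate = R.det • R⁻¹ := by
    rw [inv_def, smul_smul, Ring.mul_inverse_cancel _ hR.det_pos.ne'.isUnit, one_smul]
  exact this ▸ hR.inv.posSemidef.smul hR.det_pos.le

end Matrix

section Lindblad

variable {n ι : Type*} [Fintype n] [Fintype ι]

noncomputable def lindbladian (H : Matrix n n ℂ) (L : ι → Matrix n n ℂ) :
    Matrix n n ℂ →ₗ[ℂ] Matrix n n ℂ where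
  toFun X := -Complex.I • (H * X - X * H) +
    ∑ k, (L k * X * (L k)ᴴ - (1 / 2 : ℂ) • ((L k)ᴴ * L k * X) -
      (1 / 2 : ℂ) • (X * ((L k)ᴴ * L k)))
  map_add' X Y := by
    simp only [Matrix.mul_add, Matrix.add_mul, smul_add, smul_sub, Finset.sum_add_distrib,
      add_sub_add_comm]
    abel
  map_smul' c X := by
    simp only [Matrix.mul_smul, Matrix.smul_mul, smul_sub, smul_add, Finset.smul_sum,
      smul_comm c, RingHom.id_apply]

theorem lindbladian_apply (H : Matrix n n ℂ) (L : ι → Matrix n n ℂ) (X : Matrix n n ℂ) :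
    lindbladian H L X = -Complex.I • (H * X - X * H) +
      ∑ k, (L k * X * (L k)ᴴ - (1 / 2 : ℂ) • ((L k)ᴴ * L k * X) -
        (1 / 2 : ℂ) • (X * ((L k)ᴴ * L k))) :=
  rfl

theorem conjTranspose_lindbladian {H : Matrix n n ℂ} (hH : H.IsHermitian)
    (L : ι → Matrix n n ℂ) (X : Matrix n n ℂ) :
    (lindbladian H L X)ᴴ = lindbladian H L Xᴴ := by
  simp only [lindbladian_apply, conjTranspose_add, conjTranspose_smul, conjTranspose_sub,
    conjTranspose_mul, conjTranspose_sum, conjTranspose_conjTranspose, hH.eq, Matrix.mul_assoc]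
  simp [smul_sub]
  abel

theorem trace_adjugate_mul_lindbladian [DecidableEq n] (H : Matrix n n ℂ)
    (L : ι → Matrix n n ℂ) (R : Matrix n n ℂ) :
    (R.adjugate * lindbladian H L R).trace =
      ∑ k, (R.adjugate * (L k * R * (L k)ᴴ)).trace - R.det * ∑ k, ((L k)ᴴ * L k).trace := by
  have hright : ∀ M : Matrix n n ℂ, (R.adjugate * (M * R)).trace = R.det * M.trace := by
    intro M
    rw [trace_mul_comm, Matrix.mul_assoc, mul_adjugate, Matrix.mul_smul, Matrix.mul_one,
      trace_smul, smul_eq_mul]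
  have hleft : ∀ M : Matrix n n ℂ, (R.adjugate * (R * M)).trace = R.det * M.trace := by
    intro M
    rw [← Matrix.mul_assoc, adjugate_mul, Matrix.smul_mul, Matrix.one_mul, trace_smul,
      smul_eq_mul]
  simp only [lindbladian_apply, Matrix.mul_add, Matrix.mul_sub, Matrix.mul_smul, trace_add,
    trace_sub, trace_smul, trace_sum, hright, hleft, Finset.mul_sum, smul_eq_mul]
  rw [← Finset.sum_sub_distrib]
  simp only [sub_self, mul_zero, zero_add]
  refine Finset.sum_congr rfl fun k _ => ?_
  ring

theorem neg_det_mul_le_trace_adjugate_mul_lindbladian [DecidableEq n] (H : Matrix n n ℂ)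
    (L : ι → Matrix n n ℂ) {R : Matrix n n ℂ} (hR : R.PosDef) :
    -(R.det * ∑ k, ((L k)ᴴ * L k).trace) ≤ (R.adjugate * lindbladian H L R).trace := by
  rw [trace_adjugate_mul_lindbladian, sub_eq_add_neg]
  refine le_add_of_nonneg_left (Finset.sum_nonneg fun k _ => ?_)
  exact hR.posSemidef_adjugate.trace_mul_nonneg (hR.posSemidef.mul_mul_conjTranspose_same (L k))

theorem isHermitian_of_hasDerivAt_lindbladian {H : ℝ → Matrix n n ℂ}
    (hH : ∀ t, (H t).IsHermitian) (hHc : Continuous H) (L : ι → Matrix n n ℂ)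
    {ρ : ℝ → Matrix n n ℂ} (hρ : ∀ t, HasDerivAt ρ (lindbladian (H t) L (ρ t)) t)
    (h0 : (ρ 0).IsHermitian) : ∀ t, 0 ≤ t → (ρ t).IsHermitian := by
  let A : ℝ → Matrix n n ℂ →L[ℝ] Matrix n n ℂ := fun t =>
    LinearMap.toContinuousLinearMap ((lindbladian (H t) L).restrictScalars ℝ)
  have hA : Continuous A := continuous_clm_apply.mpr fun X => by
    change Continuous fun t => lindbladian (H t) L X
    simp only [lindbladian_apply]
    fun_prop
  have hskew : ∀ t, HasDerivAt (fun s => ρ s - (ρ s)ᴴ) (A t (ρ t - (ρ t)ᴴ)) t := by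
    intro t
    have hderiv : A t (ρ t - (ρ t)ᴴ) =
        lindbladian (H t) L (ρ t) - star (lindbladian (H t) L (ρ t)) := by
      change lindbladian (H t) L (ρ t - (ρ t)ᴴ) = _
      rw [map_sub, star_eq_conjTranspose, conjTranspose_lindbladian (hH t)]
    exact hderiv ▸ (hρ t).sub (hρ t).star
  intro t ht
  have hzero := eq_zero_of_hasDerivAt_clm_apply hA hskew (sub_eq_zero.mpr h0.symm) t ht
  exact (sub_eq_zero.mp hzero).symm

theorem posDef_of_forall_mem_Ico_posDef [DecidableEq n] {H : ℝ → Matrix n n ℂ}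
    (L : ι → Matrix n n ℂ) {ρ : ℝ → Matrix n n ℂ}
    (hρ : ∀ t, HasDerivAt ρ (lindbladian (H t) L (ρ t)) t) {T : ℝ} (hT : 0 < T)
    (hpos : ∀ s ∈ Ico 0 T, (ρ s).PosDef) : (ρ T).PosDef := by
  have hcont : Continuous ρ := continuous_iff_continuousAt.mpr fun t => (hρ t).continuousAt
  have hpsd : (ρ T).PosSemidef :=
    isClosed_setOf_posSemidef.mem_of_tendsto (hcont.continuousAt.mono_left nhdsWithin_le_nhds)
      (eventually_of_mem (Ioo_mem_nhdsLT hT) fun s hs => (hpos s ⟨hs.1.le, hs.2⟩).posSemidef)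
  have hdet : ∀ t, HasDerivAt (fun s => (ρ s).det.re)
      ((ρ t).adjugate * lindbladian (H t) L (ρ t)).trace.re t := fun t =>
    Complex.reCLM.hasFDerivAt.comp_hasDerivAt t (hasDerivAt_det (hρ t))
  have hbound : ∀ s ∈ Ico 0 T, -((∑ k, ((L k)ᴴ * L k).trace.re) * (ρ s).det.re) ≤
      ((ρ s).adjugate * lindbladian (H s) L (ρ s)).trace.re := fun s hs => by
    have h := (Complex.le_def.mp
      (neg_det_mul_le_trace_adjugate_mul_lindbladian (H s) L (hpos s hs))).1
    have him : (ρ s).det.im = 0 := (Complex.lt_def.mp (hpos s hs).det_pos).2.symm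
    simpa [Complex.mul_re, him, mul_comm] using h
  have hgrowth := le_mul_exp_of_hasDerivWithinAt hT.le
    (fun t _ => (hdet t).continuousAt.continuousWithinAt) (fun t _ => (hdet t).hasDerivWithinAt)
    hbound
  have hdet0 : 0 < (ρ 0).det.re := (Complex.lt_def.mp (hpos 0 ⟨le_rfl, hT⟩).det_pos).1
  refine hpsd.posDef_iff_det_ne_zero.mpr fun h => ?_
  rw [h, Complex.zero_re] at hgrowth
  exact (mul_pos hdet0 (Real.exp_pos _)).not_ge hgrowth

end Lindblad

theorem gkls_preserves_posDef_general (N : ℕ) (m p : ℕ)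
    (H₀ : Matrix (Fin N) (Fin N) ℂ) (hH₀ : H₀.IsHermitian)
    (Hc : Fin m → Matrix (Fin N) (Fin N) ℂ) (hHc : ∀ j, (Hc j).IsHermitian)
    (L : Fin p → Matrix (Fin N) (Fin N) ℂ)
    (u : Fin m → ℝ → ℝ) (hu : ∀ j, Continuous (u j))
    (ρ : ℝ → Matrix (Fin N) (Fin N) ℂ)
    (hode : ∀ t : ℝ, HasDerivAt ρ
      (-Complex.I • ((H₀ + ∑ j, (u j t : ℂ) • Hc j) * ρ t -
          ρ t * (H₀ + ∑ j, (u j t : ℂ) • Hc j)) +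
        ∑ k, (L k * ρ t * (L k)ᴴ - (1 / 2 : ℂ) • ((L k)ᴴ * L k * ρ t) -
          (1 / 2 : ℂ) • (ρ t * ((L k)ᴴ * L k)))) t)
    (h0 : (ρ 0).PosDef) :
    ∀ t : ℝ, 0 ≤ t → (ρ t).PosDef := by
  set H : ℝ → Matrix (Fin N) (Fin N) ℂ := fun t => H₀ + ∑ j, (u j t : ℂ) • Hc j
  have hH : ∀ t, (H t).IsHermitian := fun t => by
    simp [H, IsHermitian, conjTranspose_sum, hH₀.eq, fun j => (hHc j).eq]
  have hρ : ∀ t, HasDerivAt ρ (lindbladian (H t) L (ρ t)) t := hode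
  have hherm := isHermitian_of_hasDerivAt_lindbladian hH (by fun_prop) L hρ h0.isHermitian
  have hcont : Continuous ρ := continuous_iff_continuousAt.mpr fun t => (hρ t).continuousAt
  refine forall_ge_of_nhdsGE_of_Ico h0 (fun t ht hpos => ?_)
    (fun T hT hIco => posDef_of_forall_mem_Ico_posDef L hρ hT hIco)
  filter_upwards [nhdsWithin_le_nhds ((hcont.tendsto t).eventually hpos.eventually_posDef),
    self_mem_nhdsWithin] with s hs hts
  exact hs (hherm s (ht.trans hts))

/-- Along the controlled GKLS equation, positive definiteness of the state is preserved
in forward time: no singular density matrix (boundary point of the state set) can be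
reached in finite time from the interior by coherent control. -/
theorem gkls_preserves_posDef (N : ℕ) (hN : 1 ≤ N) (m p : ℕ)
    (H₀ : Matrix (Fin N) (Fin N) ℂ) (hH₀ : H₀.IsHermitian)
    (Hc : Fin m → Matrix (Fin N) (Fin N) ℂ) (hHc : ∀ j, (Hc j).IsHermitian)
    (L : Fin p → Matrix (Fin N) (Fin N) ℂ)
    (u : Fin m → ℝ → ℝ) (hu : ∀ j, Continuous (u j))
    (ρ : ℝ → Matrix (Fin N) (Fin N) ℂ)
    (hode : ∀ t : ℝ, HasDerivAt ρ
      (-Complex.I • ((H₀ + ∑ j, (u j t : ℂ) • Hc j) * ρ t -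
          ρ t * (H₀ + ∑ j, (u j t : ℂ) • Hc j)) +
        ∑ k, (L k * ρ t * (L k)ᴴ - (1 / 2 : ℂ) • ((L k)ᴴ * L k * ρ t) -
          (1 / 2 : ℂ) • (ρ t * ((L k)ᴴ * L k)))) t)
    (h0 : (ρ 0).PosDef) :
    ∀ t : ℝ, 0 ≤ t → (ρ t).PosDef :=
  gkls_preserves_posDef_general N m p H₀ hH₀ Hc hHc L u hu ρ hode h0
end
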